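/- Let H, Ψ be positive semi-definite d×d matrices, M ≥ 1, Γ ∈ R^{d×d}, and define H_Γ := (I − Γ H)^T H (I − Γ H) + (tr(H Γ^T H Γ)/M) H + (1/M) H Γ^T H Γ H. Then H_Γ ⪰ (1/(M+1)) H in the Loewner order. -/

import Mathlib

open Matrix

lemma psd_smul_nonneg {d : ℕ} {A : Matrix (Fin d) (Fin d) ℝ} (hA : A.PosSemidef)
    {c : ℝ} (hc : 0 ≤ c) : (c • A).PosSemidef := by
  refine PosSemidef.of_dotProduct_mulVec_nonneg ?_ ?_
  · unfold Matrix.IsHermitian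
    rw [conjTranspose_smul, star_trivial, hA.1]
  · intro x
    rw [smul_mulVec, dotProduct_smul, smul_eq_mul]
    exact mul_nonneg hc (hA.dotProduct_mulVec_nonneg x)

/-- For H positive semi-definite, M ≥ 1 and any Γ,
H_Γ := (I − Γ H)ᵀ H (I − Γ H) + (tr(H Γᵀ H Γ)/M) H + (1/M) H Γᵀ H Γ H
satisfies H_Γ ⪰ (1/(M+1)) H in the Loewner order. -/
theorem HGamma_loewner_lower_bound {d : ℕ} (H Γ : Matrix (Fin d) (Fin d) ℝ)
    (hH : H.PosSemidef) (M : ℕ) (hM : 1 ≤ M) :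
    (((1 - Γ * H)ᵀ * H * (1 - Γ * H) +
        ((H * Γᵀ * H * Γ).trace / M) • H +
        ((M : ℝ))⁻¹ • (H * Γᵀ * H * Γ * H)) -
      (((M : ℝ) + 1))⁻¹ • H).PosSemidef := by
  have hM0 : (0:ℝ) < M := by exact_mod_cast hM
  have hM1 : (0:ℝ) < (M:ℝ) + 1 := by linarith
  set a : ℝ := Real.sqrt ((M:ℝ)/((M:ℝ)+1)) with ha_def
  set b : ℝ := Real.sqrt (((M:ℝ)+1)/(M:ℝ)) with hb_def
  have ha : a*a = (M:ℝ)/((M:ℝ)+1) := Real.mul_self_sqrt (by positivity)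
  have hb : b*b = ((M:ℝ)+1)/(M:ℝ) := Real.mul_self_sqrt (by positivity)
  have hab : a*b = 1 := by
    rw [ha_def, hb_def, ← Real.sqrt_mul (by positivity)]
    rw [show (M:ℝ)/((M:ℝ)+1) * (((M:ℝ)+1)/(M:ℝ)) = 1 by field_simp]
    exact Real.sqrt_one
  set D : Matrix (Fin d) (Fin d) ℝ := a • 1 - b • (Γ * H) with hD
  have hHs : Hᵀ = H := by
    rw [← conjTranspose_eq_transpose_of_trivial]; exact hH.1
  have htr : 0 ≤ (H * Γᵀ * H * Γ).trace := by
    open MatrixOrder in set S := CFC.sqrt H with hS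
    have hSS : S * S = H := by open MatrixOrder in exact CFC.sqrt_mul_sqrt_self H hH.nonneg
    have hSsymm : Sᵀ = S := by
      rw [← conjTranspose_eq_transpose_of_trivial]; open MatrixOrder in exact (CFC.sqrt_nonneg H).posSemidef.1
    have heq : (H * Γᵀ * H * Γ).trace = ((S*Γ*S)ᵀ * (S*Γ*S)).trace := by
      have hT : (S*Γ*S)ᵀ = S * Γᵀ * S := by
        simp [transpose_mul, hSsymm, mul_assoc]
      rw [hT,
        show S * Γᵀ * S * (S * Γ * S) = (S * Γᵀ * S * S * Γ) * S from by noncomm_ring,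
        Matrix.trace_mul_comm (S * Γᵀ * S * S * Γ) S,
        show S * (S * Γᵀ * S * S * Γ) = H * Γᵀ * H * Γ from by rw [← hSS]; noncomm_ring]
    rw [heq, Matrix.trace]
    apply Finset.sum_nonneg
    intro i _
    simp only [Matrix.diag, Matrix.mul_apply, transpose_apply]
    exact Finset.sum_nonneg fun j _ => mul_self_nonneg _
  have key : (((1 - Γ * H)ᵀ * H * (1 - Γ * H) +
        ((H * Γᵀ * H * Γ).trace / M) • H +
        ((M : ℝ))⁻¹ • (H * Γᵀ * H * Γ * H)) -
      (((M : ℝ) + 1))⁻¹ • H)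
      = Dᵀ * H * D + ((H * Γᵀ * H * Γ).trace / M) • H := by
    have h1 : Dᵀ * H * D = (a*a) • H - (a*b) • (H * Γᵀ * H) - (a*b) • (H * (Γ * H))
        + (b*b) • (H * Γᵀ * H * (Γ * H)) := by
      simp only [hD, transpose_sub, transpose_smul, transpose_mul, transpose_one, hHs]
      simp only [sub_mul, mul_sub, smul_mul_assoc, mul_smul_comm, one_mul, mul_one, smul_smul,
        mul_assoc]
      module
    rw [h1, ha, hb, hab]
    have h2 : (1 - Γ * H)ᵀ * H * (1 - Γ * H)
        = H - H * Γᵀ * H - H * (Γ * H) + H * Γᵀ * H * (Γ * H) := by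
      simp only [transpose_sub, transpose_mul, transpose_one, hHs]
      noncomm_ring
    rw [h2, show H * Γᵀ * H * Γ * H = H * Γᵀ * H * (Γ * H) from by noncomm_ring]
    match_scalars <;> field_simp <;> ring
  rw [key]
  apply Matrix.PosSemidef.add
  · have := hH.conjTranspose_mul_mul_same D
    rwa [conjTranspose_eq_transpose_of_trivial] at this
  · exact psd_smul_nonneg hH (by positivity)
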